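/- arXiv:1212.5660 — 2 statements merged into one kernel-verified Lean document; each statement's English description precedes it below -/
import Mathlib

section
/- Let L be a BL-chain and x, y ∈ L. Then x + y + (x ⊗ y) = x + y. -/
/-- A BL-algebra: a bounded lattice with a commutative monoid operation `mul`
(written ⊗, with unit `⊤` playing the role of 1 and `⊥` the role of 0),
a residuum `imp` (written →), satisfying residuation, divisibility and
prelinearity. -/
class BLAlgebra (L : Type*) extends Lattice L, BoundedOrder L where
  mul : L → L → L
  imp : L → L → L
  mul_comm : ∀ x y : L, mul x y = mul y x
  mul_assoc : ∀ x y z : L, mul (mul x y) z = mul x (mul y z)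
  mul_top : ∀ x : L, mul x ⊤ = x
  residuation : ∀ x y z : L, mul x y ≤ z ↔ x ≤ imp y z
  divisibility : ∀ x y : L, x ⊓ y = mul x (imp x y)
  prelinearity : ∀ x y : L, imp x y ⊔ imp y x = ⊤

namespace BLAlgebra

variable {L : Type*} [BLAlgebra L]

/-- Negation: x̄ := x → 0. -/
def neg (x : L) : L := imp x ⊥

/-- Pseudo-addition: x ⊘ y := x̄ → y. -/
def oslash (x y : L) : L := imp (neg x) y

/-- Addition: x + y := (x ⊘ y) ∧ (y ⊘ x). -/
def add (x y : L) : L := oslash x y ⊓ oslash y x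

end BLAlgebra

open BLAlgebra
namespace BLAlgebra

variable {L : Type*} [BLAlgebra L]

lemma imp_eq_top' {u v : L} (h : u ≤ v) : imp u v = ⊤ :=
  top_le_iff.mp <| (residuation ⊤ u v).mp (by rw [BLAlgebra.mul_comm, mul_top]; exact h)

lemma top_imp' (v : L) : imp ⊤ v = v := by
  apply le_antisymm
  · have := (residuation (imp ⊤ v) ⊤ v).mpr le_rfl
    rwa [mul_top] at this
  · exact (residuation v ⊤ v).mp (by rw [mul_top])

lemma mul_neg_self' (u : L) : mul u (neg u) = ⊥ := by
  have h := divisibility u (⊥ : L)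
  rw [inf_bot_eq] at h
  exact h.symm

lemma le_negneg' (a : L) : a ≤ neg (neg a) :=
  (residuation a (neg a) ⊥).mp (le_of_eq (mul_neg_self' a))

lemma mul_le_mul_right'' {y z : L} (h : y ≤ z) (x : L) : mul y x ≤ mul z x :=
  (residuation y x (mul z x)).mpr (h.trans ((residuation z x (mul z x)).mp le_rfl))

lemma add_bot' (a : L) : add a ⊥ = a := by
  unfold add oslash
  have h1 : neg (⊥ : L) = ⊤ := imp_eq_top' le_rfl
  rw [h1, top_imp']
  exact inf_eq_right.mpr (le_negneg' a)

lemma add_top' (b : L) : add (⊤ : L) b = ⊤ := by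
  unfold add oslash
  have h1 : neg (⊤ : L) = ⊥ := top_imp' ⊥
  rw [h1, imp_eq_top' (bot_le : (⊥:L) ≤ b), imp_eq_top' (le_top : neg b ≤ ⊤), inf_idem]

end BLAlgebra

open BLAlgebra

/-- In a BL-chain, x + y + (x ⊗ y) = x + y. -/
theorem add_add_mul {L : Type*} [BLAlgebra L]
    (htot : ∀ x y : L, x ≤ y ∨ y ≤ x) (x y : L) :
    add (add x y) (mul x y) = add x y := by
  rcases htot y (neg x) with h | h
  · have hb : mul x y = ⊥ := by
      have : mul y x ≤ mul (neg x) x := mul_le_mul_right'' h x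
      rw [BLAlgebra.mul_comm (neg x) x, mul_neg_self' x] at this
      rw [BLAlgebra.mul_comm x y]
      exact le_bot_iff.mp this
    rw [hb, add_bot']
  · have h1 : oslash x y = ⊤ := imp_eq_top' h
    rcases htot x (neg y) with h2 | h2
    · have hb : mul x y = ⊥ := by
        have : mul x y ≤ mul (neg y) y := mul_le_mul_right'' h2 y
        rw [BLAlgebra.mul_comm (neg y) y, mul_neg_self' y] at this
        exact le_bot_iff.mp this
      rw [hb, add_bot']
    · have h2' : oslash y x = ⊤ := imp_eq_top' h2
      have ha : add x y = ⊤ := by rw [add, h1, h2', inf_idem]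
      rw [ha, add_top']
end

section
/- Let C be a BL-chain and let 𝐚, 𝐛, 𝐜 be good sequences in C. Then (𝐚 ∨ 𝐛) + 𝐜 = (𝐚 + 𝐜) ∨ (𝐛 + 𝐜) and (𝐚 ∧ 𝐛) + 𝐜 = (𝐚 + 𝐜) ∧ (𝐛 + 𝐜), where ∨ and ∧ denote the componentwise join and meet of sequences and + denotes the sum of sequences. -/
open BLAlgebra
/-- A good sequence in a BL-algebra `L` (indexed from 0, so `a 0` is the entry a₁):
aᵢ + aᵢ₊₁ = aᵢ for all i, and aᵣ = 0 for all sufficiently large r. -/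
def BLAlgebra.IsGood {L : Type*} [BLAlgebra L] (a : ℕ → L) : Prop :=
  (∀ i, add (a i) (a (i + 1)) = a i) ∧ ∃ n, ∀ r, n < r → a r = ⊥

/-- Sum (under the BL-algebra addition) of a list of elements. -/
def BLAlgebra.bigAdd {L : Type*} [BLAlgebra L] (l : List L) : L := l.foldr add ⊥

/-- Sum of sequences: cᵢ := aᵢ + (aᵢ₋₁ ⊗ b₁) + ⋯ + (a₁ ⊗ bᵢ₋₁) + bᵢ
(written with 0-based indexing: the entry at index k is
a k + (a (k-1) ⊗ b 0) + ⋯ + (a 0 ⊗ b (k-1)) + b k). -/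
def BLAlgebra.seqAdd {L : Type*} [BLAlgebra L] (a b : ℕ → L) : ℕ → L :=
  fun k => bigAdd (a k :: (((List.range k).map fun j => mul (a (k - 1 - j)) (b j)) ++ [b k]))

namespace BLAlgebra

variable {L : Type*} [BLAlgebra L]

lemma mul_mono_left {x y : L} (h : x ≤ y) (z : L) : mul x z ≤ mul y z :=
  (residuation x z (mul y z)).mpr (h.trans ((residuation y z (mul y z)).mp le_rfl))

lemma mul_mono_right (z : L) {x y : L} (h : x ≤ y) : mul z x ≤ mul z y := by
  rw [BLAlgebra.mul_comm z x, BLAlgebra.mul_comm z y]; exact mul_mono_left h z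

lemma mul_le_left (x y : L) : mul x y ≤ x := by
  have := mul_mono_right x (le_top : y ≤ ⊤)
  rwa [mul_top] at this

lemma le_imp (x y : L) : y ≤ imp x y :=
  (residuation y x y).mp (mul_le_left y x)

lemma imp_eq_top_of_le {x y : L} (h : x ≤ y) : imp x y = ⊤ :=
  top_unique ((residuation ⊤ x y).mp (by rw [BLAlgebra.mul_comm, mul_top]; exact h))

lemma mul_neg (x : L) : mul x (neg x) = ⊥ :=
  le_bot_iff.mp (by rw [BLAlgebra.mul_comm]; exact (residuation (neg x) x ⊥).mpr le_rfl)

lemma imp_mono_right (x : L) {y y' : L} (h : y ≤ y') : imp x y ≤ imp x y' :=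
  (residuation _ x y').mp (((residuation (imp x y) x y).mpr le_rfl).trans h)

lemma imp_anti_left {x x' : L} (h : x ≤ x') (y : L) : imp x' y ≤ imp x y :=
  (residuation _ x y).mp ((mul_mono_right _ h).trans ((residuation (imp x' y) x' y).mpr le_rfl))

lemma neg_anti {x y : L} (h : x ≤ y) : neg y ≤ neg x := imp_anti_left h ⊥

lemma le_oslash_left (x y : L) : x ≤ oslash x y :=
  (residuation x (neg x) y).mp (by rw [mul_neg]; exact bot_le)

lemma le_add_left (x y : L) : x ≤ add x y :=
  le_inf (le_oslash_left x y) (le_imp _ _)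

lemma le_add_right (x y : L) : y ≤ add x y :=
  le_inf (le_imp _ _) (le_oslash_left y x)

lemma oslash_mono {x x' y y' : L} (hx : x ≤ x') (hy : y ≤ y') :
    oslash x y ≤ oslash x' y' :=
  (imp_anti_left (neg_anti hx) y).trans (imp_mono_right _ hy)

lemma add_mono {x x' y y' : L} (hx : x ≤ x') (hy : y ≤ y') :
    add x y ≤ add x' y' :=
  inf_le_inf (oslash_mono hx hy) (oslash_mono hy hx)

/-- Key fact: in a BL-chain, `add x y = x` forces `x = ⊤` or `y = ⊥`. -/
lemma add_eq_left_cases (htot : ∀ x y : L, x ≤ y ∨ y ≤ x) {x y : L}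
    (h : add x y = x) : x = ⊤ ∨ y = ⊥ := by
  by_cases hx : x = ⊤
  · exact Or.inl hx
  right
  rcases htot (oslash x y) (oslash y x) with hc | hc
  · have h1 : oslash x y = x := by
      rw [add, inf_eq_left.mpr hc] at h; exact h
    have h2 : neg x ⊓ y = ⊥ := by
      rw [divisibility (neg x) y]
      show mul (neg x) (oslash x y) = ⊥
      rw [h1, BLAlgebra.mul_comm, mul_neg]
    rcases htot (neg x) y with hnx | hnx
    · have hb : neg x = ⊥ := by rwa [inf_eq_left.mpr hnx] at h2
      exfalso; apply hx
      rw [← h1]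
      show imp (neg x) y = ⊤
      rw [hb]
      exact imp_eq_top_of_le bot_le
    · rwa [inf_eq_right.mpr hnx] at h2
  · have h1 : oslash y x = x := by
      rw [add, inf_eq_right.mpr hc] at h; exact h
    have hny : x ≤ neg y := by
      rcases htot (neg y) x with hh | hh
      · exact absurd (h1 ▸ imp_eq_top_of_le hh : x = ⊤) hx
      · exact hh
    have hx2 : mul (neg y) x = x := by
      have hd := divisibility (neg y) x
      rw [inf_eq_right.mpr hny] at hd
      rw [show imp (neg y) x = x from h1] at hd
      exact hd.symm
    have hyx : y ≤ x := h ▸ le_add_right x y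
    have h3 : y = mul x (imp x y) := by
      rw [← divisibility]; exact (inf_eq_right.mpr hyx).symm
    calc y = mul x (imp x y) := h3
      _ = mul (mul (neg y) x) (imp x y) := by rw [hx2]
      _ = mul (neg y) (mul x (imp x y)) := BLAlgebra.mul_assoc _ _ _
      _ = mul (neg y) y := by rw [← h3]
      _ = ⊥ := by rw [BLAlgebra.mul_comm]; exact mul_neg y

lemma good_antitone {a : ℕ → L} (ha : IsGood a) : Antitone a :=
  antitone_nat_of_succ_le fun i => (ha.1 i) ▸ le_add_right (a i) (a (i + 1))

lemma good_bot_of_ne_top (htot : ∀ x y : L, x ≤ y ∨ y ≤ x) {a : ℕ → L}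
    (ha : IsGood a) {j : ℕ} (hj : a j ≠ ⊤) {k : ℕ} (hk : j < k) : a k = ⊥ := by
  have h1 : a (j + 1) = ⊥ := (add_eq_left_cases htot (ha.1 j)).resolve_left hj
  have h2 : a k ≤ a (j + 1) := good_antitone ha hk
  exact le_bot_iff.mp (h1 ▸ h2)

lemma good_comparable (htot : ∀ x y : L, x ≤ y ∨ y ≤ x) {a b : ℕ → L}
    (ha : IsGood a) (hb : IsGood b) :
    (∀ i, a i ≤ b i) ∨ (∀ i, b i ≤ a i) := by
  by_cases h : ∀ i, a i ≤ b i
  · exact Or.inl h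
  right
  push_neg at h
  obtain ⟨i, hi⟩ := h
  have hba : b i ≤ a i := (htot (a i) (b i)).resolve_left hi
  intro j
  rcases lt_trichotomy j i with hj | rfl | hj
  · have haj : a j = ⊤ := by
      by_contra hne
      exact hi ((good_bot_of_ne_top htot ha hne hj) ▸ bot_le)
    rw [haj]; exact le_top
  · exact hba
  · have hbi : b i ≠ ⊤ := fun ht => hi (ht ▸ le_top)
    rw [good_bot_of_ne_top htot hb hbi hj]
    exact bot_le

lemma forall₂_map_le {α : Type*} (l : List α) (f g : α → L)
    (h : ∀ x, f x ≤ g x) : List.Forall₂ (· ≤ ·) (l.map f) (l.map g) := by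
  induction l with
  | nil => simp
  | cons x t ih => exact List.Forall₂.cons (h x) ih

lemma bigAdd_mono {l₁ l₂ : List L} (h : List.Forall₂ (· ≤ ·) l₁ l₂) :
    bigAdd l₁ ≤ bigAdd l₂ := by
  induction h with
  | nil => exact le_rfl
  | cons hx _ ih => exact add_mono hx ih

lemma seqAdd_mono_left {a b : ℕ → L} (h : ∀ i, a i ≤ b i) (c : ℕ → L) (k : ℕ) :
    seqAdd a c k ≤ seqAdd b c k := by
  apply bigAdd_mono
  refine List.Forall₂.cons (h k) ?_
  refine List.rel_append ?_ (List.Forall₂.cons le_rfl List.Forall₂.nil)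
  exact forall₂_map_le _ _ _ fun j => mul_mono_left (h _) _

end BLAlgebra

/-- In a BL-chain, for good sequences 𝐚, 𝐛, 𝐜:
(𝐚 ∨ 𝐛) + 𝐜 = (𝐚 + 𝐜) ∨ (𝐛 + 𝐜) and (𝐚 ∧ 𝐛) + 𝐜 = (𝐚 + 𝐜) ∧ (𝐛 + 𝐜),
where joins/meets of sequences are componentwise. -/
theorem seqAdd_sup_inf_distrib_chain {L : Type*} [BLAlgebra L]
    (htot : ∀ x y : L, x ≤ y ∨ y ≤ x) (a b c : ℕ → L)
    (ha : IsGood a) (hb : IsGood b) (hc : IsGood c) :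
    seqAdd (fun i => a i ⊔ b i) c = (fun i => seqAdd a c i ⊔ seqAdd b c i) ∧
    seqAdd (fun i => a i ⊓ b i) c = (fun i => seqAdd a c i ⊓ seqAdd b c i) := by
  obtain h | h := good_comparable htot ha hb
  · constructor
    · have e : (fun i => a i ⊔ b i) = b := funext fun i => sup_eq_right.mpr (h i)
      rw [e]; funext i
      exact (sup_eq_right.mpr (seqAdd_mono_left h c i)).symm
    · have e : (fun i => a i ⊓ b i) = a := funext fun i => inf_eq_left.mpr (h i)
      rw [e]; funext i
      exact (inf_eq_left.mpr (seqAdd_mono_left h c i)).symm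
  · constructor
    · have e : (fun i => a i ⊔ b i) = a := funext fun i => sup_eq_left.mpr (h i)
      rw [e]; funext i
      exact (sup_eq_left.mpr (seqAdd_mono_left h c i)).symm
    · have e : (fun i => a i ⊓ b i) = b := funext fun i => inf_eq_right.mpr (h i)
      rw [e]; funext i
      exact (inf_eq_right.mpr (seqAdd_mono_left h c i)).symm
end
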